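/- Ranocha's flux is kinetic-energy-preserving and pressure-equilibrium-preserving: for every γ > 1 its components satisfy f^num_{ρv}(u₋, u₊) = {v} f^num_ρ(u₋, u₊) + {p} for all pairs of states with ρ₋ ≠ ρ₊ and ρ₋/p₋ ≠ ρ₊/p₊, and for every pair of states with common velocity v₋ = v₊ = v, common pressure p₋ = p₊ = p, and ρ₋ ≠ ρ₊ one has f^num_ρ = ρ^log v, f^num_{ρv} = v f^num_ρ + p, and f^num_{ρe} = (v²/2) f^num_ρ + (γ/(γ−1)) p v. -/
import Mathlib


noncomputable section
open Real

/-- A state `u = (ρ, v, p)` of the 1D compressible Euler equations: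
density `u.1`, velocity `u.2.1`, pressure `u.2.2`. -/
abbrev EulerState := ℝ × ℝ × ℝ

/-- Logarithmic mean `(a₊ - a₋)/(log a₊ - log a₋)` (left argument is the `-` state). -/
def logMean (am ap : ℝ) : ℝ := (ap - am)/(Real.log ap - Real.log am)

/-- Ranocha's EC, KEP and PEP two-point numerical flux. -/
def ranochaFlux (γ : ℝ) (um up : EulerState) : EulerState :=
  (logMean um.1 up.1 * ((um.2.1 + up.2.1)/2),
   logMean um.1 up.1 * ((um.2.1 + up.2.1)/2)^2 + (um.2.2 + up.2.2)/2,
   (1/2) * logMean um.1 up.1 * ((um.2.1 + up.2.1)/2) * ((up.2.1*um.2.1 + um.2.1*up.2.1)/2)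
     + (1/(γ-1)) * logMean um.1 up.1 * (logMean (um.1/um.2.2) (up.1/up.2.2))⁻¹
        * ((um.2.1 + up.2.1)/2)
     + (up.2.2*um.2.1 + um.2.2*up.2.1)/2)

/-- Ranocha's flux is kinetic-energy-preserving and
pressure-equilibrium-preserving: `f^num_{ρv} = {v} f^num_ρ + {p}` for all pairs of
admissible states, and at a pressure equilibrium (`v₋ = v₊ = v`, `p₋ = p₊ = p`,
`ρ₋ ≠ ρ₊`) one has `f^num_ρ = ρ^log v`, `f^num_{ρv} = v f^num_ρ + p`, and
`f^num_{ρe} = (v²/2) f^num_ρ + (γ/(γ-1)) p v`. -/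
theorem ranochaFlux_KEP_and_PEP (γ : ℝ) (hγ : 1 < γ) :
    (∀ ρm ρp vm vp pm pp : ℝ,
      0 < ρm → 0 < ρp → 0 < pm → 0 < pp → ρm ≠ ρp → ρm/pm ≠ ρp/pp →
      (ranochaFlux γ (ρm, vm, pm) (ρp, vp, pp)).2.1
        = ((vm + vp)/2) * (ranochaFlux γ (ρm, vm, pm) (ρp, vp, pp)).1 + (pm + pp)/2)
    ∧
    (∀ ρm ρp v p : ℝ, 0 < ρm → 0 < ρp → 0 < p → ρm ≠ ρp →
      (ranochaFlux γ (ρm, v, p) (ρp, v, p)).1 = logMean ρm ρp * v ∧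
      (ranochaFlux γ (ρm, v, p) (ρp, v, p)).2.1
        = v * (ranochaFlux γ (ρm, v, p) (ρp, v, p)).1 + p ∧
      (ranochaFlux γ (ρm, v, p) (ρp, v, p)).2.2
        = (v^2/2) * (ranochaFlux γ (ρm, v, p) (ρp, v, p)).1 + (γ/(γ-1)) * p * v) := by
  constructor
  · intro ρm ρp vm vp pm pp _ _ _ _ _ _
    simp only [ranochaFlux]
    ring
  · intro ρm ρp v p hρm hρp hp hne
    have hL : Real.log ρp - Real.log ρm ≠ 0 := by
      intro h
      exact hne (Real.log_injOn_pos (Set.mem_Ioi.mpr hρm) (Set.mem_Ioi.mpr hρp)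
        (by linarith))
    have hρne : ρp - ρm ≠ 0 := sub_ne_zero.mpr (Ne.symm hne)
    have hlm : logMean ρm ρp ≠ 0 := div_ne_zero hρne hL
    have hquot : logMean (ρm/p) (ρp/p) = logMean ρm ρp / p := by
      unfold logMean
      rw [Real.log_div (ne_of_gt hρm) (ne_of_gt hp),
          Real.log_div (ne_of_gt hρp) (ne_of_gt hp)]
      rw [show Real.log ρp - Real.log p - (Real.log ρm - Real.log p)
            = Real.log ρp - Real.log ρm by ring, div_sub_div_same, div_div,
          div_div, mul_comm]
    refine ⟨?_, ?_, ?_⟩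
    · simp only [ranochaFlux]; ring
    · simp only [ranochaFlux]; ring
    · simp only [ranochaFlux, hquot]
      have hγ1 : γ - 1 ≠ 0 := by linarith
      rw [inv_div]
      field_simp
      ring
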